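/- For any fixed θ₀ ∈ ℝ and every ε ∈ (0,1), with probability at least 1 − ε: n α M_α(θ₀) ≤ −n α (θ₀ − m) + (n α²/2)[(θ₀ − m)² + v] + 1/(2β) + log(ε⁻¹). -/

import Mathlib

/-!
Exponentiating turns `n α M_α(θ₀)` into a product of the independent factors
`1 + α (Yᵢ - θ₀) + (α²/2)(Yᵢ - θ₀)² + 1/(2βn)`, which are positive because `1 + t + t²/2 > 0`.
Each has expectation `1 + a ≤ exp a` with `a = α (m - θ₀) + (α²/2)((θ₀ - m)² + v) + 1/(2βn)`,
so Chernoff's bound at parameter `1` gives `P(n α M_α(θ₀) ≥ n a + log ε⁻¹) ≤ ε`,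
and `n a` is exactly the deterministic part of the claimed bound.
-/

open MeasureTheory ProbabilityTheory

/-- The PAC-Bayesian truncated mean statistic
`M_α(θ₀) = (1/(n α)) ∑ᵢ log (1 + α (Yᵢ - θ₀) + (α²/2) (Yᵢ - θ₀)² + 1/(2 β n))`. -/
noncomputable def Mstat (n : ℕ) (α β θ₀ : ℝ) (Y : Fin n → ℝ) : ℝ :=
  (1 / (n * α)) * ∑ i,
    Real.log (1 + α * (Y i - θ₀) + α ^ 2 / 2 * (Y i - θ₀) ^ 2 + 1 / (2 * β * n))

open Real

section SecondMoment

variable {μ : Measure ℝ}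

lemma integrable_id_of_integrable_sq [IsFiniteMeasure μ] (hL2 : Integrable (fun y => y ^ 2) μ) :
    Integrable (fun y => y) μ :=
  ((memLp_two_iff_integrable_sq aestronglyMeasurable_id).2 hL2).integrable one_le_two

lemma integrable_sub_sq [IsFiniteMeasure μ] (hL2 : Integrable (fun y => y ^ 2) μ) (θ : ℝ) :
    Integrable (fun y => (y - θ) ^ 2) μ :=
  (memLp_two_iff_integrable_sq (by fun_prop)).1 <|
    ((memLp_two_iff_integrable_sq aestronglyMeasurable_id).2 hL2).sub (memLp_const θ)

variable [IsProbabilityMeasure μ]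

lemma integral_sub_sq (hL2 : Integrable (fun y => y ^ 2) μ) (θ : ℝ) :
    ∫ y, (y - θ) ^ 2 ∂μ = ∫ y, y ^ 2 ∂μ - 2 * θ * ∫ y, y ∂μ + θ ^ 2 := by
  have hL1 := integrable_id_of_integrable_sq hL2
  have hquad : Integrable (fun y => y ^ 2 - 2 * θ * y) μ := hL2.sub (hL1.const_mul _)
  calc ∫ y, (y - θ) ^ 2 ∂μ = ∫ y, (y ^ 2 - 2 * θ * y + θ ^ 2) ∂μ :=
        integral_congr_ae (ae_of_all _ fun y => by ring)
    _ = _ := by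
        rw [integral_add hquad (integrable_const _), integral_sub hL2 (hL1.const_mul _),
          integral_const_mul]
        simp

lemma integral_sub_sq_eq_centered_add_sq (hL2 : Integrable (fun y => y ^ 2) μ) (θ : ℝ) :
    ∫ y, (y - θ) ^ 2 ∂μ = ∫ y, (y - ∫ z, z ∂μ) ^ 2 ∂μ + (θ - ∫ z, z ∂μ) ^ 2 := by
  rw [integral_sub_sq hL2, integral_sub_sq hL2]
  ring

end SecondMoment

-- The argument of Catoni's `ψ(x) = log (1 + x + x²/2)` at `x = α (y - θ₀)`, shifted by `c`.
noncomputable def catoniArg (α θ₀ c y : ℝ) : ℝ := 1 + α * (y - θ₀) + α ^ 2 / 2 * (y - θ₀) ^ 2 + c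

section CatoniArg

variable {α θ₀ c : ℝ}

lemma catoniArg_pos (hc : 0 ≤ c) (y : ℝ) : 0 < catoniArg α θ₀ c y := by
  unfold catoniArg
  nlinarith [sq_nonneg (1 + α * (y - θ₀))]

@[fun_prop]
lemma measurable_catoniArg : Measurable (catoniArg α θ₀ c) := by
  unfold catoniArg
  fun_prop

variable {μ : Measure ℝ}

lemma integrable_catoniArg [IsFiniteMeasure μ] (hL2 : Integrable (fun y => y ^ 2) μ) :
    Integrable (catoniArg α θ₀ c) μ := by
  have h1 : Integrable (fun y => y - θ₀) μ :=
    (integrable_id_of_integrable_sq hL2).sub (integrable_const θ₀)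
  have h2 := integrable_sub_sq hL2 θ₀
  unfold catoniArg
  fun_prop

lemma integral_catoniArg [IsProbabilityMeasure μ] (hL2 : Integrable (fun y => y ^ 2) μ) :
    ∫ y, catoniArg α θ₀ c y ∂μ = 1 + α * ((∫ y, y ∂μ) - θ₀) +
      α ^ 2 / 2 * ((θ₀ - ∫ y, y ∂μ) ^ 2 + ∫ y, (y - ∫ z, z ∂μ) ^ 2 ∂μ) + c := by
  have hL1 := integrable_id_of_integrable_sq hL2
  have h1 : Integrable (fun y => y - θ₀) μ := hL1.sub (integrable_const θ₀)
  have h2 := integrable_sub_sq hL2 θ₀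
  unfold catoniArg
  rw [integral_add (by fun_prop) (by fun_prop), integral_add (by fun_prop) (by fun_prop),
    integral_add (by fun_prop) (by fun_prop), integral_const_mul, integral_const_mul,
    integral_sub hL1 (integrable_const θ₀), integral_sub_sq_eq_centered_add_sq hL2]
  simp only [integral_const, probReal_univ, smul_eq_mul, one_mul]
  ring

end CatoniArg

lemma natCast_mul_mul_Mstat {n : ℕ} (hn : n ≠ 0) {α : ℝ} (hα : α ≠ 0) (β θ₀ : ℝ)
    (Y : Fin n → ℝ) :
    n * α * Mstat n α β θ₀ Y = ∑ i, Real.log (catoniArg α θ₀ (1 / (2 * β * n)) (Y i)) := by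
  rw [Mstat, ← mul_assoc, mul_one_div_cancel (by positivity), one_mul]
  rfl

theorem iIndepFun.ofReal_one_sub_le_measure_sum_le {Ω ι : Type*} [MeasurableSpace Ω]
    {P : Measure Ω} [IsProbabilityMeasure P] [Fintype ι] {X : ι → Ω → ℝ}
    (hindep : iIndepFun X P) (hX : ∀ i, Measurable (X i))
    (hint : ∀ i, Integrable (fun ω => exp (X i ω)) P) {a : ℝ}
    (hmom : ∀ i, ∫ ω, exp (X i ω) ∂P ≤ exp a) {ε : ℝ} (hε : 0 < ε) :
    ENNReal.ofReal (1 - ε) ≤ P {ω | ∑ i, X i ω ≤ Fintype.card ι * a + log ε⁻¹} := by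
  set t := Fintype.card ι * a + log ε⁻¹
  have hmgf : mgf (∑ i, X i) P 1 ≤ exp (Fintype.card ι * a) := by
    rw [hindep.mgf_sum hX, exp_nat_mul, ← Finset.card_univ, ← Finset.prod_const]
    exact Finset.prod_le_prod (fun i _ => mgf_nonneg) fun i _ => by simpa [mgf] using hmom i
  have htail : P.real {ω | t ≤ ∑ i, X i ω} ≤ ε := by
    have hchernoff := measure_ge_le_exp_mul_mgf t zero_le_one
      (hindep.integrable_exp_mul_sum hX (s := Finset.univ) fun i _ => by simpa using hint i)
    simp only [Finset.sum_apply] at hchernoff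
    calc _ ≤ exp (-1 * t) * mgf (∑ i, X i) P 1 := hchernoff
      _ ≤ exp (-1 * t) * exp (Fintype.card ι * a) := by gcongr
      _ = ε := by
        rw [← exp_add, show -1 * t + Fintype.card ι * a = log ε by simp [t], exp_log hε]
  have hmeas : MeasurableSet {ω | t ≤ ∑ i, X i ω} :=
    measurableSet_le measurable_const (Finset.measurable_fun_sum _ fun i _ => hX i)
  rw [ENNReal.ofReal_le_iff_le_toReal (measure_ne_top _ _), ← measureReal_def]
  calc 1 - ε ≤ 1 - P.real {ω | t ≤ ∑ i, X i ω} := by linarith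
    _ = P.real {ω | t ≤ ∑ i, X i ω}ᶜ := (probReal_compl_eq_one_sub hmeas).symm
    _ ≤ P.real {ω | ∑ i, X i ω ≤ t} :=
        measureReal_mono fun _ h => (not_le.mp (Set.notMem_ofPred_iff.mp h)).le

/-- Proposition (upper deviation of the statistic at a fixed point): for any fixed `θ₀ ∈ ℝ`,
with probability at least `1 - ε`,
`n α M_α(θ₀) ≤ -n α (θ₀ - m) + (n α²/2)[(θ₀ - m)² + v] + 1/(2β) + log (ε⁻¹)`. -/
theorem Mstat_pointwise_upper_deviation
    {Ω : Type*} [MeasurableSpace Ω] (P : Measure Ω) [IsProbabilityMeasure P]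
    (n : ℕ) (hn : 0 < n) (Y : Fin n → Ω → ℝ) (hYmeas : ∀ i, Measurable (Y i))
    (μ : Measure ℝ) [IsProbabilityMeasure μ]
    (hindep : iIndepFun Y P)
    (hid : ∀ i, Measure.map (Y i) P = μ)
    (hL2 : Integrable (fun y => y ^ 2) μ)
    (m v : ℝ) (hm : m = ∫ y, y ∂μ) (hv : v = ∫ y, (y - m) ^ 2 ∂μ)
    (α β : ℝ) (hα : 0 < α) (hβ : 0 < β)
    (θ₀ : ℝ) (ε : ℝ) (hε : ε ∈ Set.Ioo (0 : ℝ) 1) :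
    ENNReal.ofReal (1 - ε) ≤
      P {ω | n * α * Mstat n α β θ₀ (fun i => Y i ω) ≤
        -(n * α * (θ₀ - m)) + n * α ^ 2 / 2 * ((θ₀ - m) ^ 2 + v) + 1 / (2 * β) +
          Real.log ε⁻¹} := by
  set c := 1 / (2 * β * n)
  have hc : 0 ≤ c := by positivity
  set a := α * (m - θ₀) + α ^ 2 / 2 * ((θ₀ - m) ^ 2 + v) + c
  set X : Fin n → Ω → ℝ := fun i ω => log (catoniArg α θ₀ c (Y i ω))
  have hexp (i : Fin n) : (fun ω => exp (X i ω)) = catoniArg α θ₀ c ∘ Y i :=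
    funext fun ω => exp_log (catoniArg_pos hc _)
  have hint (i : Fin n) : Integrable (fun ω => exp (X i ω)) P := by
    rw [hexp, ← integrable_map_measure (by fun_prop) (hYmeas i).aemeasurable, hid]
    exact integrable_catoniArg hL2
  have hmom (i : Fin n) : ∫ ω, exp (X i ω) ∂P ≤ exp a := by
    calc ∫ ω, exp (X i ω) ∂P = ∫ y, catoniArg α θ₀ c y ∂μ := by
          rw [hexp, ← hid i, integral_map (hYmeas i).aemeasurable (by fun_prop)]
          rfl
      _ = a + 1 := by rw [integral_catoniArg hL2, ← hm, ← hv]; ring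
      _ ≤ exp a := add_one_le_exp a
  convert iIndepFun.ofReal_one_sub_le_measure_sum_le
    (hindep.comp (fun _ y => log (catoniArg α θ₀ c y)) fun _ => measurable_catoniArg.log)
    (fun i => measurable_catoniArg.log.comp (hYmeas i)) hint hmom hε.1 using 5
  · exact natCast_mul_mul_Mstat hn.ne' hα.ne' β θ₀ _
  · simp only [a, c, Fintype.card_fin]
    field_simp
    ring
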